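/- For real numbers a < b, define δ_{a,b}(t) = (b·e^{bt} − a·e^{at})/(e^{bt} − e^{at}) − 1/t for t ≠ 0. Then δ_{a,b} is strictly concave on (0, ∞), i.e., its second derivative is negative for all t > 0. -/

import Mathlib

/-!
With `m = (a + b) / 2` and `h = (b - a) / 2` one has `δ_{a,b}(t) = m + h L(h t)`, where
`L x = coth x - 1 / x` is the Langevin function, so `δ_{a,b}'' t = h³ L''(h t)`.
Since `L'' x = 2 cosh x / sinh³ x - 2 / x³`, its negativity for `x > 0` is Lazarević's
inequality `x³ cosh x < sinh³ x`. That inequality holds because `sinh y / cosh^{1/3} y - y`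
vanishes at `0` and has derivative `(2c² + 1) / (3 c^{4/3}) - 1 > 0`, where `c = cosh y > 1`,
by AM-GM applied to `c², c², 1`.
-/

open Real Filter Topology

lemma three_mul_pow_four_lt_two_mul_pow_six_add_one {r : ℝ} (hr : 1 < r) :
    3 * r ^ 4 < 2 * r ^ 6 + 1 := by
  have hr2 : 0 < r ^ 2 - 1 := by nlinarith
  linear_combination mul_pos (pow_pos hr2 2) (by positivity : (0 : ℝ) < 2 * r ^ 2 + 1)

lemma cosh_rpow_inv_three_pow_three (x : ℝ) : (cosh x ^ (3⁻¹ : ℝ)) ^ 3 = cosh x := by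
  simpa using rpow_inv_natCast_pow (cosh_pos x).le (n := 3) (by norm_num)

lemma hasDerivAt_sinh_div_cosh_rpow_third (x : ℝ) :
    HasDerivAt (fun y => sinh y / cosh y ^ (3⁻¹ : ℝ))
      ((2 * cosh x ^ 2 + 1) / (3 * (cosh x ^ (3⁻¹ : ℝ)) ^ 4)) x := by
  set r := cosh x ^ (3⁻¹ : ℝ) with hr
  have hc : cosh x ≠ 0 := (cosh_pos x).ne'
  have hr0 : r ≠ 0 := (rpow_pos_of_pos (cosh_pos x) _).ne'
  have hr3 : r ^ 3 = cosh x := cosh_rpow_inv_three_pow_three x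
  have hroot := (hasDerivAt_cosh x).rpow_const (p := 3⁻¹) (Or.inl hc)
  refine ((hasDerivAt_sinh x).div hroot hr0).congr_deriv ?_
  rw [rpow_sub_one hc, ← hr, ← hr3]
  have hcosh_sq := cosh_sq x
  rw [← hr3] at hcosh_sq
  field_simp
  linear_combination hcosh_sq

lemma pow_three_mul_cosh_lt_sinh_pow_three {x : ℝ} (hx : 0 < x) : x ^ 3 * cosh x < sinh x ^ 3 := by
  set f : ℝ → ℝ := fun y => sinh y / cosh y ^ (3⁻¹ : ℝ) - y
  have hf : ∀ y, HasDerivAt f ((2 * cosh y ^ 2 + 1) / (3 * (cosh y ^ (3⁻¹ : ℝ)) ^ 4) - 1) y :=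
    fun y => (hasDerivAt_sinh_div_cosh_rpow_third y).sub (hasDerivAt_id y)
  have hmono : StrictMonoOn f (Set.Ici 0) := by
    refine strictMonoOn_of_deriv_pos (convex_Ici 0)
      (fun y _ => (hf y).continuousAt.continuousWithinAt) fun y hy => ?_
    rw [interior_Ici, Set.mem_Ioi] at hy
    set r := cosh y ^ (3⁻¹ : ℝ)
    have hr : 1 < r :=
      (one_lt_rpow_iff_of_pos (cosh_pos y)).2 (Or.inl ⟨one_lt_cosh.2 hy.ne', by norm_num⟩)
    have h6 : cosh y ^ 2 = r ^ 6 := by rw [← cosh_rpow_inv_three_pow_three y]; ring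
    rw [(hf y).deriv, sub_pos, one_lt_div (by positivity), h6]
    exact three_mul_pow_four_lt_two_mul_pow_six_add_one hr
  have hfx : 0 < f x := by simpa [f] using hmono Set.self_mem_Ici hx.le hx
  have hxr : x * cosh x ^ (3⁻¹ : ℝ) < sinh x := by
    rwa [sub_pos, lt_div_iff₀ (rpow_pos_of_pos (cosh_pos x) _)] at hfx
  calc x ^ 3 * cosh x = (x * cosh x ^ (3⁻¹ : ℝ)) ^ 3 := by
        rw [mul_pow, cosh_rpow_inv_three_pow_three]
    _ < sinh x ^ 3 := pow_lt_pow_left₀ hxr (by positivity) (by norm_num)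

noncomputable def langevin (x : ℝ) : ℝ := cosh x / sinh x - 1 / x

lemma hasDerivAt_langevin {x : ℝ} (hx : x ≠ 0) :
    HasDerivAt langevin ((x ^ 2)⁻¹ - (sinh x ^ 2)⁻¹) x := by
  have hs : sinh x ≠ 0 := sinh_ne_zero.2 hx
  have hinv : HasDerivAt (fun y : ℝ => 1 / y) (-(x ^ 2)⁻¹) x := by
    simpa only [one_div] using hasDerivAt_inv hx
  refine (((hasDerivAt_cosh x).div (hasDerivAt_sinh x) hs).sub hinv).congr_deriv ?_
  field_simp
  linear_combination (-(x ^ 2)) * cosh_sq x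

lemma hasDerivAt_deriv_langevin {x : ℝ} (hx : x ≠ 0) :
    HasDerivAt (deriv langevin) (2 * cosh x / sinh x ^ 3 - 2 / x ^ 3) x := by
  have heq : deriv langevin =ᶠ[𝓝 x] fun y => (y ^ 2)⁻¹ - (sinh y ^ 2)⁻¹ :=
    (eventually_ne_nhds hx).mono fun y hy => (hasDerivAt_langevin hy).deriv
  have hs : sinh x ≠ 0 := sinh_ne_zero.2 hx
  have hsq := (hasDerivAt_pow 2 x).inv (pow_ne_zero 2 hx)
  have hsinh_sq := ((hasDerivAt_sinh x).pow 2).inv (pow_ne_zero 2 hs)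
  refine ((hsq.sub hsinh_sq).congr_of_eventuallyEq heq).congr_deriv ?_
  simp only [Pi.pow_apply]
  field_simp
  ring

lemma deriv_deriv_langevin_neg {x : ℝ} (hx : 0 < x) : deriv (deriv langevin) x < 0 := by
  rw [(hasDerivAt_deriv_langevin hx.ne').deriv, sub_neg,
    div_lt_div_iff₀ (pow_pos (sinh_pos_iff.2 hx) 3) (by positivity)]
  linarith [pow_three_mul_cosh_lt_sinh_pow_three hx]

lemma deriv_const_mul_comp_mul (f : ℝ → ℝ) (k h t : ℝ) :
    deriv (fun s => k * f (h * s)) t = k * h * deriv f (h * t) := by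
  rw [deriv_const_mul_field, deriv_comp_mul_left, smul_eq_mul, mul_assoc]

lemma deriv_deriv_const_add_mul_comp_mul (f : ℝ → ℝ) (c h t : ℝ) :
    deriv (deriv fun s => c + h * f (h * s)) t = h ^ 3 * deriv (deriv f) (h * t) := by
  have hd : deriv (fun s => c + h * f (h * s)) = fun s => h * h * deriv f (h * s) := by
    funext s
    rw [deriv_const_add, deriv_const_mul_comp_mul]
  rw [hd, deriv_const_mul_comp_mul]
  ring

lemma exp_ratio_sub_inv_eq_langevin {a b t : ℝ} (hab : a ≠ b) (ht : t ≠ 0) :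
    (b * exp (b * t) - a * exp (a * t)) / (exp (b * t) - exp (a * t)) - 1 / t
      = (a + b) / 2 + (b - a) / 2 * langevin ((b - a) / 2 * t) := by
  have hh : (b - a) / 2 * t ≠ 0 := mul_ne_zero (by grind) ht
  have hb : exp (b * t) = exp ((a + b) / 2 * t) * exp ((b - a) / 2 * t) := by
    rw [← exp_add]; ring_nf
  have ha : exp (a * t) = exp ((a + b) / 2 * t) * exp (-((b - a) / 2 * t)) := by
    rw [← exp_add]; ring_nf
  have hs : exp ((b - a) / 2 * t) - exp (-((b - a) / 2 * t)) ≠ 0 := by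
    rw [sub_ne_zero, Ne, exp_eq_exp]
    exact fun h => hh (by linarith)
  have hE := (exp_pos ((a + b) / 2 * t)).ne'
  rw [langevin, cosh_eq, sinh_eq, hb, ha, ← mul_sub]
  generalize exp ((a + b) / 2 * t) = E, exp ((b - a) / 2 * t) = P,
    exp (-((b - a) / 2 * t)) = Q at *
  field_simp
  ring

theorem delta_second_deriv_neg (a b : ℝ) (hab : a < b) (t : ℝ) (ht : 0 < t) :
    deriv (deriv (fun t : ℝ =>
      (b * Real.exp (b * t) - a * Real.exp (a * t)) /
        (Real.exp (b * t) - Real.exp (a * t)) - 1 / t)) t < 0 := by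
  have hh : 0 < (b - a) / 2 := by linarith
  have heq : (fun t : ℝ => (b * exp (b * t) - a * exp (a * t)) /
        (exp (b * t) - exp (a * t)) - 1 / t) =ᶠ[𝓝 t]
      fun s => (a + b) / 2 + (b - a) / 2 * langevin ((b - a) / 2 * s) :=
    (eventually_ne_nhds ht.ne').mono fun s hs => exp_ratio_sub_inv_eq_langevin hab.ne hs
  rw [heq.deriv.deriv_eq, deriv_deriv_const_add_mul_comp_mul]
  exact mul_neg_of_pos_of_neg (pow_pos hh 3) (deriv_deriv_langevin_neg (mul_pos hh ht))
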